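/- Energy dissipation of the two-species implicit gradient-flow scheme with saturation: under the two-species scheme relations, assume additionally that for each 1 ≤ i ≤ N−1: (a) both entries of u_{i+1/2} are ≥ 0 or both entries are ≤ 0, and (b) the 2×2 matrices diag(ρ_i^{n+1}, η_i^{n+1})·max(ψ(σ_{i+1}^{n+1}),0)·S_{i+1/2} and diag(ρ_{i+1}^{n+1}, η_{i+1}^{n+1})·max(ψ(σ_i^{n+1}),0)·S_{i+1/2} are positive semidefinite. Then the discrete energy satisfies E_Δ[ρ^{n+1}, η^{n+1}] ≤ E_Δ[ρ^n, η^n], with no restriction on Δt. -/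

import Mathlib

/-- A *saturation* with saturation level `α > 0`: a continuous non-increasing function
`ψ : [0,∞) → ℝ` with `ψ α = 0` and `(α − s)·ψ s > 0` for every `s ≥ 0`, `s ≠ α`. -/
def IsSaturation (ψ : ℝ → ℝ) (α : ℝ) : Prop :=
  0 < α ∧ ContinuousOn ψ (Set.Ici 0) ∧
    (∀ s₁ s₂, 0 ≤ s₁ → s₁ ≤ s₂ → ψ s₂ ≤ ψ s₁) ∧
    ψ α = 0 ∧ ∀ s, 0 ≤ s → s ≠ α → 0 < (α - s) * ψ s

/-- Discrete free energy of the two-species system. -/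
noncomputable def discreteEnergy2 (Δx : ℝ) (N : ℕ) (Hρ Hη Hσ : ℝ → ℝ)
    (Vρ Vη : ℕ → ℝ) (Wρ Wη Wσ : ℤ → ℝ) (ρ η : ℕ → ℝ) : ℝ :=
  (∑ i ∈ Finset.Icc 1 N, (Hρ (ρ i) + Hη (η i) + Hσ (ρ i + η i)) * Δx) +
    (∑ i ∈ Finset.Icc 1 N, (Vρ i * ρ i + Vη i * η i) * Δx) +
    (1 / 2) * ∑ i ∈ Finset.Icc 1 N, ∑ k ∈ Finset.Icc 1 N,
      (Wρ ((i : ℤ) - (k : ℤ)) * ρ i * ρ k + Wη ((i : ℤ) - (k : ℤ)) * η i * η k +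
        2 * Wσ ((i : ℤ) - (k : ℤ)) * ρ i * η k) * Δx ^ 2

/-- Tangent-line inequality for a convex differentiable function. -/
lemma tangent_ineq {H : ℝ → ℝ} (hc : ConvexOn ℝ Set.univ H)
    (hd : Differentiable ℝ H) (a b : ℝ) : H a - H b ≤ deriv H a * (a - b) := by
  rcases lt_trichotomy a b with h | rfl | h
  · have h1 := hc.deriv_le_slope (Set.mem_univ a) (Set.mem_univ b) h (hd a)
    rw [slope_def_field, le_div_iff₀ (by linarith)] at h1
    nlinarith
  · simp
  · have h1 := hc.slope_le_deriv (Set.mem_univ b) (Set.mem_univ a) h (hd a)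
    rw [slope_def_field, div_le_iff₀ (by linarith)] at h1
    nlinarith

/-- Symmetry of a double sum against an even kernel. -/
lemma swap_sym (N : ℕ) (W : ℤ → ℝ) (hW : ∀ j, W (-j) = W j) (f g : ℕ → ℝ) :
    ∑ i ∈ Finset.Icc 1 N, ∑ k ∈ Finset.Icc 1 N, W ((i : ℤ) - (k : ℤ)) * f i * g k
      = ∑ i ∈ Finset.Icc 1 N, ∑ k ∈ Finset.Icc 1 N, W ((i : ℤ) - (k : ℤ)) * g i * f k := by
  rw [Finset.sum_comm]
  refine Finset.sum_congr rfl fun i _ => Finset.sum_congr rfl fun k _ => ?_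
  rw [show ((k : ℤ) - (i : ℤ)) = -((i : ℤ) - (k : ℤ)) by ring, hW]
  ring

/-- Abel summation by parts on `Icc 1 N`. -/
lemma abel_sum (φ G : ℕ → ℝ) : ∀ N : ℕ, 1 ≤ N →
    ∑ i ∈ Finset.Icc 1 N, φ i * (G i - G (i - 1)) =
      φ N * G N - φ 1 * G 0 + ∑ i ∈ Finset.Icc 1 (N - 1), (φ i - φ (i + 1)) * G i := by
  intro N
  induction N with
  | zero => intro h; omega
  | succ n ih =>
    intro _
    rcases Nat.eq_zero_or_pos n with rfl | hn
    · simp; ring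
    · have key := ih hn
      rw [Finset.sum_Icc_succ_top (by omega : 1 ≤ n + 1), key]
      have hsub : (n + 1 : ℕ) - 1 = n := rfl
      rw [hsub]
      have hn' : n - 1 + 1 = n := by omega
      have hIcc2 : ∑ i ∈ Finset.Icc 1 n, (φ i - φ (i + 1)) * G i
          = (∑ i ∈ Finset.Icc 1 (n - 1), (φ i - φ (i + 1)) * G i) + (φ n - φ (n + 1)) * G n := by
        conv_lhs => rw [← hn']
        rw [Finset.sum_Icc_succ_top (by omega : 1 ≤ n - 1 + 1), hn']
      rw [hIcc2]
      ring

/-- The midpoint identity for the interaction-energy difference. -/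
lemma heart (N : ℕ) (Wρ Wη Wσ : ℤ → ℝ)
    (hWρ : ∀ j, Wρ (-j) = Wρ j) (hWη : ∀ j, Wη (-j) = Wη j) (hWσ : ∀ j, Wσ (-j) = Wσ j)
    (a b c d : ℕ → ℝ) (Δx : ℝ) :
    (1 / 2) * (∑ i ∈ Finset.Icc 1 N, ∑ k ∈ Finset.Icc 1 N,
        (Wρ ((i : ℤ) - (k : ℤ)) * a i * a k + Wη ((i : ℤ) - (k : ℤ)) * c i * c k +
          2 * Wσ ((i : ℤ) - (k : ℤ)) * a i * c k) * Δx ^ 2)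
      - (1 / 2) * (∑ i ∈ Finset.Icc 1 N, ∑ k ∈ Finset.Icc 1 N,
        (Wρ ((i : ℤ) - (k : ℤ)) * b i * b k + Wη ((i : ℤ) - (k : ℤ)) * d i * d k +
          2 * Wσ ((i : ℤ) - (k : ℤ)) * b i * d k) * Δx ^ 2)
    = ∑ i ∈ Finset.Icc 1 N,
        (((∑ k ∈ Finset.Icc 1 N, Wρ ((i : ℤ) - (k : ℤ)) * ((a k + b k) / 2) * Δx)
          + (∑ k ∈ Finset.Icc 1 N, Wσ ((i : ℤ) - (k : ℤ)) * ((c k + d k) / 2) * Δx)) * (a i - b i)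
        + ((∑ k ∈ Finset.Icc 1 N, Wη ((i : ℤ) - (k : ℤ)) * ((c k + d k) / 2) * Δx)
          + (∑ k ∈ Finset.Icc 1 N, Wσ ((i : ℤ) - (k : ℤ)) * ((a k + b k) / 2) * Δx)) * (c i - d i)) * Δx := by
  have h1 : (∑ i ∈ Finset.Icc 1 N, ∑ k ∈ Finset.Icc 1 N,
        Wρ ((i : ℤ) - (k : ℤ)) * ((a i + b i) / 2) * (a k - b k))
      = ∑ i ∈ Finset.Icc 1 N, ∑ k ∈ Finset.Icc 1 N,
        Wρ ((i : ℤ) - (k : ℤ)) * (a i - b i) * ((a k + b k) / 2) :=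
    swap_sym N Wρ hWρ (fun i => (a i + b i) / 2) (fun i => a i - b i)
  have h2 : (∑ i ∈ Finset.Icc 1 N, ∑ k ∈ Finset.Icc 1 N,
        Wη ((i : ℤ) - (k : ℤ)) * ((c i + d i) / 2) * (c k - d k))
      = ∑ i ∈ Finset.Icc 1 N, ∑ k ∈ Finset.Icc 1 N,
        Wη ((i : ℤ) - (k : ℤ)) * (c i - d i) * ((c k + d k) / 2) :=
    swap_sym N Wη hWη (fun i => (c i + d i) / 2) (fun i => c i - d i)
  have h3 : (∑ i ∈ Finset.Icc 1 N, ∑ k ∈ Finset.Icc 1 N,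
        Wσ ((i : ℤ) - (k : ℤ)) * ((a i + b i) / 2) * (c k - d k))
      = ∑ i ∈ Finset.Icc 1 N, ∑ k ∈ Finset.Icc 1 N,
        Wσ ((i : ℤ) - (k : ℤ)) * (c i - d i) * ((a k + b k) / 2) :=
    swap_sym N Wσ hWσ (fun i => (a i + b i) / 2) (fun i => c i - d i)
  have eL : (1 / 2) * (∑ i ∈ Finset.Icc 1 N, ∑ k ∈ Finset.Icc 1 N,
        (Wρ ((i : ℤ) - (k : ℤ)) * a i * a k + Wη ((i : ℤ) - (k : ℤ)) * c i * c k +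
          2 * Wσ ((i : ℤ) - (k : ℤ)) * a i * c k) * Δx ^ 2)
      - (1 / 2) * (∑ i ∈ Finset.Icc 1 N, ∑ k ∈ Finset.Icc 1 N,
        (Wρ ((i : ℤ) - (k : ℤ)) * b i * b k + Wη ((i : ℤ) - (k : ℤ)) * d i * d k +
          2 * Wσ ((i : ℤ) - (k : ℤ)) * b i * d k) * Δx ^ 2)
    = (1 / 2) * Δx ^ 2 *
        ((∑ i ∈ Finset.Icc 1 N, ∑ k ∈ Finset.Icc 1 N,
            Wρ ((i : ℤ) - (k : ℤ)) * (a i - b i) * ((a k + b k) / 2))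
          + (∑ i ∈ Finset.Icc 1 N, ∑ k ∈ Finset.Icc 1 N,
            Wρ ((i : ℤ) - (k : ℤ)) * ((a i + b i) / 2) * (a k - b k)))
      + (1 / 2) * Δx ^ 2 *
        ((∑ i ∈ Finset.Icc 1 N, ∑ k ∈ Finset.Icc 1 N,
            Wη ((i : ℤ) - (k : ℤ)) * (c i - d i) * ((c k + d k) / 2))
          + (∑ i ∈ Finset.Icc 1 N, ∑ k ∈ Finset.Icc 1 N,
            Wη ((i : ℤ) - (k : ℤ)) * ((c i + d i) / 2) * (c k - d k)))
      + Δx ^ 2 *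
        ((∑ i ∈ Finset.Icc 1 N, ∑ k ∈ Finset.Icc 1 N,
            Wσ ((i : ℤ) - (k : ℤ)) * (a i - b i) * ((c k + d k) / 2))
          + (∑ i ∈ Finset.Icc 1 N, ∑ k ∈ Finset.Icc 1 N,
            Wσ ((i : ℤ) - (k : ℤ)) * ((a i + b i) / 2) * (c k - d k))) := by
    simp only [Finset.mul_sum, Finset.sum_mul, mul_add, add_mul, ← Finset.sum_add_distrib,
      ← Finset.sum_sub_distrib]
    refine Finset.sum_congr rfl fun i _ => Finset.sum_congr rfl fun k _ => by ring
  have eR : (∑ i ∈ Finset.Icc 1 N,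
        (((∑ k ∈ Finset.Icc 1 N, Wρ ((i : ℤ) - (k : ℤ)) * ((a k + b k) / 2) * Δx)
          + (∑ k ∈ Finset.Icc 1 N, Wσ ((i : ℤ) - (k : ℤ)) * ((c k + d k) / 2) * Δx)) * (a i - b i)
        + ((∑ k ∈ Finset.Icc 1 N, Wη ((i : ℤ) - (k : ℤ)) * ((c k + d k) / 2) * Δx)
          + (∑ k ∈ Finset.Icc 1 N, Wσ ((i : ℤ) - (k : ℤ)) * ((a k + b k) / 2) * Δx)) * (c i - d i)) * Δx)
    = Δx ^ 2 * (∑ i ∈ Finset.Icc 1 N, ∑ k ∈ Finset.Icc 1 N,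
            Wρ ((i : ℤ) - (k : ℤ)) * (a i - b i) * ((a k + b k) / 2))
      + Δx ^ 2 * (∑ i ∈ Finset.Icc 1 N, ∑ k ∈ Finset.Icc 1 N,
            Wη ((i : ℤ) - (k : ℤ)) * (c i - d i) * ((c k + d k) / 2))
      + Δx ^ 2 * (∑ i ∈ Finset.Icc 1 N, ∑ k ∈ Finset.Icc 1 N,
            Wσ ((i : ℤ) - (k : ℤ)) * (a i - b i) * ((c k + d k) / 2))
      + Δx ^ 2 * (∑ i ∈ Finset.Icc 1 N, ∑ k ∈ Finset.Icc 1 N,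
            Wσ ((i : ℤ) - (k : ℤ)) * (c i - d i) * ((a k + b k) / 2)) := by
    simp only [Finset.mul_sum, Finset.sum_mul, mul_add, add_mul, ← Finset.sum_add_distrib,
      ← Finset.sum_sub_distrib]
    refine Finset.sum_congr rfl fun i _ => Finset.sum_congr rfl fun k _ => by ring
  rw [eL, eR, h1, h2, h3]
  ring

set_option maxHeartbeats 1600000 in
theorem two_species_energy_dissipation
    (ψ : ℝ → ℝ) (α : ℝ) (hψ : IsSaturation ψ α)
    (Δx Δt : ℝ) (hΔx : 0 < Δx) (hΔt : 0 < Δt)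
    (N : ℕ) (hN : 1 ≤ N)
    (Hρ Hη Hσ : ℝ → ℝ)
    (hHρconv : ConvexOn ℝ Set.univ Hρ) (hHρdiff : Differentiable ℝ Hρ)
    (hHηconv : ConvexOn ℝ Set.univ Hη) (hHηdiff : Differentiable ℝ Hη)
    (hHσconv : ConvexOn ℝ Set.univ Hσ) (hHσdiff : Differentiable ℝ Hσ)
    (Vρ Vη : ℕ → ℝ) (Wρ Wη Wσ : ℤ → ℝ)
    (hWρ : ∀ j, Wρ (-j) = Wρ j) (hWη : ∀ j, Wη (-j) = Wη j) (hWσ : ∀ j, Wσ (-j) = Wσ j)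
    (ρn ηn ρn1 ηn1 ξρ ξη : ℕ → ℝ)
    (S : ℕ → Matrix (Fin 2) (Fin 2) ℝ) (u F : ℕ → Fin 2 → ℝ)
    (hξρ : ∀ i, ξρ i = deriv Hρ (ρn1 i) + deriv Hσ (ρn1 i + ηn1 i) + Vρ i +
      (∑ k ∈ Finset.Icc 1 N, Wρ ((i : ℤ) - (k : ℤ)) * ((ρn1 k + ρn k) / 2) * Δx) +
      (∑ k ∈ Finset.Icc 1 N, Wσ ((i : ℤ) - (k : ℤ)) * ((ηn1 k + ηn k) / 2) * Δx))
    (hξη : ∀ i, ξη i = deriv Hη (ηn1 i) + deriv Hσ (ρn1 i + ηn1 i) + Vη i +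
      (∑ k ∈ Finset.Icc 1 N, Wη ((i : ℤ) - (k : ℤ)) * ((ηn1 k + ηn k) / 2) * Δx) +
      (∑ k ∈ Finset.Icc 1 N, Wσ ((i : ℤ) - (k : ℤ)) * ((ρn1 k + ρn k) / 2) * Δx))
    (hu : ∀ i p, u i p =
      -(∑ q, S i p q * (![ξρ (i + 1), ξη (i + 1)] q - ![ξρ i, ξη i] q)) / Δx)
    (hF0 : ∀ p, F 0 p = 0) (hFN : ∀ p, F N p = 0)
    (hFdef : ∀ i, 1 ≤ i → i + 1 ≤ N → ∀ p,
      F i p = ![ρn1 i, ηn1 i] p * max (ψ (ρn1 (i + 1) + ηn1 (i + 1))) 0 * max (u i p) 0 +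
        ![ρn1 (i + 1), ηn1 (i + 1)] p * max (ψ (ρn1 i + ηn1 i)) 0 * min (u i p) 0)
    (hscheme : ∀ i, 1 ≤ i → i ≤ N →
      ρn1 i = ρn i - Δt / Δx * (F i 0 - F (i - 1) 0) ∧
      ηn1 i = ηn i - Δt / Δx * (F i 1 - F (i - 1) 1))
    (hsign : ∀ i, 1 ≤ i → i + 1 ≤ N → (∀ p, 0 ≤ u i p) ∨ (∀ p, u i p ≤ 0))
    (hpsd : ∀ i, 1 ≤ i → i + 1 ≤ N → ∀ x : Fin 2 → ℝ,
      (0 ≤ ∑ p, ∑ q, x p *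
        (![ρn1 i, ηn1 i] p * max (ψ (ρn1 (i + 1) + ηn1 (i + 1))) 0 * S i p q) * x q) ∧
      (0 ≤ ∑ p, ∑ q, x p *
        (![ρn1 (i + 1), ηn1 (i + 1)] p * max (ψ (ρn1 i + ηn1 i)) 0 * S i p q) * x q)) :
    discreteEnergy2 Δx N Hρ Hη Hσ Vρ Vη Wρ Wη Wσ ρn1 ηn1 ≤
      discreteEnergy2 Δx N Hρ Hη Hσ Vρ Vη Wρ Wη Wσ ρn ηn := by
  have hΔx' : Δx ≠ 0 := ne_of_gt hΔx
  -- Step 1: energy difference is bounded by the entropy-variable pairing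
  have key : discreteEnergy2 Δx N Hρ Hη Hσ Vρ Vη Wρ Wη Wσ ρn1 ηn1 -
      discreteEnergy2 Δx N Hρ Hη Hσ Vρ Vη Wρ Wη Wσ ρn ηn ≤
      ∑ i ∈ Finset.Icc 1 N, (ξρ i * (ρn1 i - ρn i) + ξη i * (ηn1 i - ηn i)) * Δx := by
    have hheart := heart N Wρ Wη Wσ hWρ hWη hWσ ρn1 ρn ηn1 ηn Δx
    have main : (∑ i ∈ Finset.Icc 1 N, (Hρ (ρn1 i) + Hη (ηn1 i) + Hσ (ρn1 i + ηn1 i)) * Δx)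
        - (∑ i ∈ Finset.Icc 1 N, (Hρ (ρn i) + Hη (ηn i) + Hσ (ρn i + ηn i)) * Δx)
        + ((∑ i ∈ Finset.Icc 1 N, (Vρ i * ρn1 i + Vη i * ηn1 i) * Δx)
          - (∑ i ∈ Finset.Icc 1 N, (Vρ i * ρn i + Vη i * ηn i) * Δx))
        + (∑ i ∈ Finset.Icc 1 N,
            (((∑ k ∈ Finset.Icc 1 N, Wρ ((i : ℤ) - (k : ℤ)) * ((ρn1 k + ρn k) / 2) * Δx)
              + (∑ k ∈ Finset.Icc 1 N, Wσ ((i : ℤ) - (k : ℤ)) * ((ηn1 k + ηn k) / 2) * Δx)) * (ρn1 i - ρn i)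
            + ((∑ k ∈ Finset.Icc 1 N, Wη ((i : ℤ) - (k : ℤ)) * ((ηn1 k + ηn k) / 2) * Δx)
              + (∑ k ∈ Finset.Icc 1 N, Wσ ((i : ℤ) - (k : ℤ)) * ((ρn1 k + ρn k) / 2) * Δx)) * (ηn1 i - ηn i)) * Δx)
        ≤ ∑ i ∈ Finset.Icc 1 N, (ξρ i * (ρn1 i - ρn i) + ξη i * (ηn1 i - ηn i)) * Δx := by
      rw [← Finset.sum_sub_distrib, ← Finset.sum_sub_distrib, ← Finset.sum_add_distrib,
        ← Finset.sum_add_distrib]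
      refine Finset.sum_le_sum fun i _ => ?_
      have t1 := tangent_ineq hHρconv hHρdiff (ρn1 i) (ρn i)
      have t2 := tangent_ineq hHηconv hHηdiff (ηn1 i) (ηn i)
      have t3 := tangent_ineq hHσconv hHσdiff (ρn1 i + ηn1 i) (ρn i + ηn i)
      rw [hξρ i, hξη i]
      have hs : (Hρ (ρn1 i) - Hρ (ρn i)) + (Hη (ηn1 i) - Hη (ηn i))
          + (Hσ (ρn1 i + ηn1 i) - Hσ (ρn i + ηn i))
          ≤ deriv Hρ (ρn1 i) * (ρn1 i - ρn i) + deriv Hη (ηn1 i) * (ηn1 i - ηn i)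
            + deriv Hσ (ρn1 i + ηn1 i) * ((ρn1 i + ηn1 i) - (ρn i + ηn i)) := by linarith
      have hs' := mul_le_mul_of_nonneg_right hs hΔx.le
      linarith [hs']
    simp only [discreteEnergy2]
    linarith [main, hheart]
  -- Step 2: the pairing is nonpositive
  have nonpos : ∑ i ∈ Finset.Icc 1 N,
      (ξρ i * (ρn1 i - ρn i) + ξη i * (ηn1 i - ηn i)) * Δx ≤ 0 := by
    have hpair : ∀ i ∈ Finset.Icc 1 N,
        (ξρ i * (ρn1 i - ρn i) + ξη i * (ηn1 i - ηn i)) * Δx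
        = -Δt * (ξρ i * (F i 0 - F (i - 1) 0) + ξη i * (F i 1 - F (i - 1) 1)) := by
      intro i hi
      obtain ⟨hi1, hi2⟩ := Finset.mem_Icc.mp hi
      obtain ⟨e1, e2⟩ := hscheme i hi1 hi2
      rw [e1, e2]
      field_simp
      ring
    rw [Finset.sum_congr rfl hpair]
    have hsplit : ∑ i ∈ Finset.Icc 1 N,
        -Δt * (ξρ i * (F i 0 - F (i - 1) 0) + ξη i * (F i 1 - F (i - 1) 1))
        = -Δt * ((∑ i ∈ Finset.Icc 1 N, ξρ i * (F i 0 - F (i - 1) 0))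
          + (∑ i ∈ Finset.Icc 1 N, ξη i * (F i 1 - F (i - 1) 1))) := by
      rw [mul_add, Finset.mul_sum, Finset.mul_sum, ← Finset.sum_add_distrib]
      exact Finset.sum_congr rfl fun i _ => by ring
    rw [hsplit]
    have hA0 := abel_sum ξρ (fun j => F j 0) N hN
    have hA1 := abel_sum ξη (fun j => F j 1) N hN
    rw [hA0, hA1, hF0 0, hF0 1, hFN 0, hFN 1]
    have hface : ∀ i ∈ Finset.Icc 1 (N - 1),
        0 ≤ (ξρ i - ξρ (i + 1)) * F i 0 + (ξη i - ξη (i + 1)) * F i 1 := by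
      intro i hi
      obtain ⟨hi1, hi2⟩ := Finset.mem_Icc.mp hi
      have hiN : i + 1 ≤ N := by omega
      have hu0 : u i 0 = -(S i 0 0 * (ξρ (i + 1) - ξρ i) + S i 0 1 * (ξη (i + 1) - ξη i)) / Δx := by
        rw [hu i 0, Fin.sum_univ_two]
        simp [Matrix.cons_val_zero, Matrix.cons_val_one, Matrix.head_cons]
      have hu1 : u i 1 = -(S i 1 0 * (ξρ (i + 1) - ξρ i) + S i 1 1 * (ξη (i + 1) - ξη i)) / Δx := by
        rw [hu i 1, Fin.sum_univ_two]
        simp [Matrix.cons_val_zero, Matrix.cons_val_one, Matrix.head_cons]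
      have hF0' : F i 0 = ρn1 i * max (ψ (ρn1 (i + 1) + ηn1 (i + 1))) 0 * max (u i 0) 0 +
          ρn1 (i + 1) * max (ψ (ρn1 i + ηn1 i)) 0 * min (u i 0) 0 := by
        rw [hFdef i hi1 hiN 0]
        simp [Matrix.cons_val_zero]
      have hF1' : F i 1 = ηn1 i * max (ψ (ρn1 (i + 1) + ηn1 (i + 1))) 0 * max (u i 1) 0 +
          ηn1 (i + 1) * max (ψ (ρn1 i + ηn1 i)) 0 * min (u i 1) 0 := by
        rw [hFdef i hi1 hiN 1]
        simp [Matrix.cons_val_one, Matrix.head_cons]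
      have hQ := hpsd i hi1 hiN ![ξρ (i + 1) - ξρ i, ξη (i + 1) - ξη i]
      simp only [Fin.sum_univ_two, Matrix.cons_val_zero, Matrix.cons_val_one,
        Matrix.head_cons] at hQ
      obtain ⟨hQ1, hQ2⟩ := hQ
      rcases hsign i hi1 hiN with hpos | hneg
      · have hE : ((ξρ i - ξρ (i + 1)) * F i 0 + (ξη i - ξη (i + 1)) * F i 1) * Δx
            = (ξρ (i + 1) - ξρ i) * (ρn1 i * max (ψ (ρn1 (i + 1) + ηn1 (i + 1))) 0 * S i 0 0)
                * (ξρ (i + 1) - ξρ i)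
              + (ξρ (i + 1) - ξρ i) * (ρn1 i * max (ψ (ρn1 (i + 1) + ηn1 (i + 1))) 0 * S i 0 1)
                * (ξη (i + 1) - ξη i)
              + ((ξη (i + 1) - ξη i) * (ηn1 i * max (ψ (ρn1 (i + 1) + ηn1 (i + 1))) 0 * S i 1 0)
                * (ξρ (i + 1) - ξρ i)
              + (ξη (i + 1) - ξη i) * (ηn1 i * max (ψ (ρn1 (i + 1) + ηn1 (i + 1))) 0 * S i 1 1)
                * (ξη (i + 1) - ξη i)) := by
          rw [hF0', hF1', max_eq_left (hpos 0), max_eq_left (hpos 1),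
            min_eq_right (hpos 0), min_eq_right (hpos 1), hu0, hu1]
          field_simp
          ring
        nlinarith [hQ1, hE, hΔx]
      · have hE : ((ξρ i - ξρ (i + 1)) * F i 0 + (ξη i - ξη (i + 1)) * F i 1) * Δx
            = (ξρ (i + 1) - ξρ i) * (ρn1 (i + 1) * max (ψ (ρn1 i + ηn1 i)) 0 * S i 0 0)
                * (ξρ (i + 1) - ξρ i)
              + (ξρ (i + 1) - ξρ i) * (ρn1 (i + 1) * max (ψ (ρn1 i + ηn1 i)) 0 * S i 0 1)
                * (ξη (i + 1) - ξη i)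
              + ((ξη (i + 1) - ξη i) * (ηn1 (i + 1) * max (ψ (ρn1 i + ηn1 i)) 0 * S i 1 0)
                * (ξρ (i + 1) - ξρ i)
              + (ξη (i + 1) - ξη i) * (ηn1 (i + 1) * max (ψ (ρn1 i + ηn1 i)) 0 * S i 1 1)
                * (ξη (i + 1) - ξη i)) := by
          rw [hF0', hF1', max_eq_right (hneg 0), max_eq_right (hneg 1),
            min_eq_left (hneg 0), min_eq_left (hneg 1), hu0, hu1]
          field_simp
          ring
        nlinarith [hQ2, hE, hΔx]
    have hterm : 0 ≤ ∑ i ∈ Finset.Icc 1 (N - 1),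
        ((ξρ i - ξρ (i + 1)) * F i 0 + (ξη i - ξη (i + 1)) * F i 1) :=
      Finset.sum_nonneg hface
    have hcomb : (∑ i ∈ Finset.Icc 1 (N - 1), (ξρ i - ξρ (i + 1)) * F i 0)
        + (∑ i ∈ Finset.Icc 1 (N - 1), (ξη i - ξη (i + 1)) * F i 1)
        = ∑ i ∈ Finset.Icc 1 (N - 1),
            ((ξρ i - ξρ (i + 1)) * F i 0 + (ξη i - ξη (i + 1)) * F i 1) :=
      Finset.sum_add_distrib.symm
    nlinarith [hΔt, hterm, hcomb]
  linarith
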